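/- arXiv:2106.12231 — 2 statements merged into one kernel-verified Lean document; each statement's English description precedes it below -/
import Mathlib

section
/- Let H be a Hilbert space, Q ∈ ℕ, and let P_1, …, P_Q be orthogonal projections onto closed subspaces H_1, …, H_Q of H. Let θ = min_{q ≠ k} ∠(H_q, H_k) be the minimal first principal angle between distinct subspaces, where ∠(U, W) = min{ arccos⟨u, w⟩ : u ∈ U, w ∈ W, ‖u‖ = ‖w‖ = 1 }. Then for every f ∈ H, ∑_{q=1}^Q ‖P_q f‖² ≤ (1 + Q² cos θ) ‖f‖². -/
local notation "⟪" x ", " y "⟫_ℝ" => @inner ℝ _ _ x y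

/-!
Write `x q = P_q f`, `S = ∑ ‖x q‖²` and `g = ∑ x q`. Since each `P_q` is a symmetric idempotent,
`S = ⟪g, f⟫`. The angle bound gives `⟪x q, x k⟫ ≤ c ‖x q‖ ‖x k‖` for `q ≠ k`, and Cauchy–Schwarz
in `ℝ^Q` turns `c (∑ ‖x q‖)²` into `Q c S`, so `‖g‖² ≤ (1 + Q c) S`. Then
`S² = ⟪g, f⟫² ≤ ‖g‖² ‖f‖² ≤ (1 + Q c) S ‖f‖²`, i.e. `S ≤ (1 + Q c) ‖f‖² ≤ (1 + Q² c) ‖f‖²`.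
-/

open Finset

section

variable {H : Type*} [NormedAddCommGroup H] [InnerProductSpace ℝ H]

theorem real_inner_le_mul_norm_mul_norm_of_forall_norm_eq_one {U W : Submodule ℝ H} {c : ℝ}
    (h : ∀ u ∈ U, ∀ w ∈ W, ‖u‖ = 1 → ‖w‖ = 1 → ⟪u, w⟫_ℝ ≤ c)
    {u w : H} (hu : u ∈ U) (hw : w ∈ W) : ⟪u, w⟫_ℝ ≤ c * (‖u‖ * ‖w‖) := by
  rcases eq_or_ne u 0 with rfl | hu0
  · simp
  rcases eq_or_ne w 0 with rfl | hw0
  · simp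
  have hunit := h _ (U.smul_mem (‖u‖⁻¹ : ℝ) hu) _ (W.smul_mem (‖w‖⁻¹ : ℝ) hw)
    (norm_smul_inv_norm hu0) (norm_smul_inv_norm hw0)
  rw [real_inner_smul_left, real_inner_smul_right, ← mul_assoc, ← mul_inv,
    inv_mul_le_iff₀ (by positivity)] at hunit
  linarith

theorem norm_sum_sq_le_of_inner_le {ι : Type*} [Fintype ι] (x : ι → H) {c : ℝ} (hc0 : 0 ≤ c)
    (h : ∀ i j, i ≠ j → ⟪x i, x j⟫_ℝ ≤ c * (‖x i‖ * ‖x j‖)) :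
    ‖∑ i, x i‖ ^ 2 ≤ (1 + Fintype.card ι * c) * ∑ i, ‖x i‖ ^ 2 := by
  classical
  have hpair : ∀ i j, ⟪x i, x j⟫_ℝ ≤ (if i = j then ‖x i‖ ^ 2 else 0) + c * (‖x i‖ * ‖x j‖) := by
    intro i j
    by_cases hij : i = j
    · subst hij
      rw [if_pos rfl, real_inner_self_eq_norm_sq]
      exact le_add_of_nonneg_right (by positivity)
    · simpa [hij] using h i j hij
  have hcs : (∑ i, ‖x i‖) ^ 2 ≤ Fintype.card ι * ∑ i, ‖x i‖ ^ 2 := sq_sum_le_card_mul_sum_sq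
  calc ‖∑ i, x i‖ ^ 2 = ∑ i, ∑ j, ⟪x i, x j⟫_ℝ := by
        rw [← real_inner_self_eq_norm_sq, sum_inner]
        simp only [inner_sum]
    _ ≤ ∑ i, ∑ j, ((if i = j then ‖x i‖ ^ 2 else 0) + c * (‖x i‖ * ‖x j‖)) :=
        sum_le_sum fun i _ => sum_le_sum fun j _ => hpair i j
    _ = ∑ i, ‖x i‖ ^ 2 + c * (∑ i, ‖x i‖) ^ 2 := by
        simp only [sum_add_distrib, sum_ite_eq, mem_univ, if_true, ← mul_sum, sq, sum_mul_sum]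
    _ ≤ ∑ i, ‖x i‖ ^ 2 + c * (Fintype.card ι * ∑ i, ‖x i‖ ^ 2) := by gcongr
    _ = (1 + Fintype.card ι * c) * ∑ i, ‖x i‖ ^ 2 := by ring

theorem real_inner_le_mul_norm_sq_of_norm_sq_le {g f : H} {A : ℝ} (hA : 0 ≤ A)
    (h : ‖g‖ ^ 2 ≤ A * ⟪g, f⟫_ℝ) : ⟪g, f⟫_ℝ ≤ A * ‖f‖ ^ 2 := by
  rcases le_or_gt ⟪g, f⟫_ℝ 0 with hs | hs
  · exact hs.trans (by positivity)
  refine le_of_mul_le_mul_left ?_ hs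
  calc ⟪g, f⟫_ℝ * ⟪g, f⟫_ℝ ≤ ‖g‖ ^ 2 * ‖f‖ ^ 2 := by
        rw [← mul_pow, ← sq]
        exact pow_le_pow_left₀ hs.le (real_inner_le_norm g f) 2
    _ ≤ A * ⟪g, f⟫_ℝ * ‖f‖ ^ 2 := by gcongr
    _ = ⟪g, f⟫_ℝ * (A * ‖f‖ ^ 2) := by ring

theorem Submodule.norm_starProjection_sq_eq_real_inner (K : Submodule ℝ H)
    [K.HasOrthogonalProjection] (v : H) : ‖K.starProjection v‖ ^ 2 = ⟪K.starProjection v, v⟫_ℝ := by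
  simpa using (K.re_inner_starProjection_eq_normSq v).symm

end

theorem stmt_0_general
    {H : Type*} [NormedAddCommGroup H] [InnerProductSpace ℝ H]
    (Q : ℕ) (K : Fin Q → Submodule ℝ H) [∀ q, Submodule.HasOrthogonalProjection (K q)]
    (c : ℝ) (hc0 : 0 ≤ c)
    (hc : ∀ q k, q ≠ k → ∀ u ∈ K q, ∀ w ∈ K k, ‖u‖ = 1 → ‖w‖ = 1 → ⟪u, w⟫_ℝ ≤ c)
    (f : H) :
    ∑ q, ‖(Submodule.orthogonalProjectionOnto (K q) f : H)‖ ^ 2 ≤ (1 + (Q : ℝ) ^ 2 * c) * ‖f‖ ^ 2 := by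
  set x : Fin Q → H := fun q => (K q).starProjection f
  have hS : ∑ q, ‖x q‖ ^ 2 = ⟪∑ q, x q, f⟫_ℝ := by
    simp only [x, sum_inner, Submodule.norm_starProjection_sq_eq_real_inner]
  have hcross : ∀ q k, q ≠ k → ⟪x q, x k⟫_ℝ ≤ c * (‖x q‖ * ‖x k‖) := fun q k hqk =>
    real_inner_le_mul_norm_mul_norm_of_forall_norm_eq_one (hc q k hqk)
      ((K q).starProjection_apply_mem f) ((K k).starProjection_apply_mem f)
  have hg := norm_sum_sq_le_of_inner_le x hc0 hcross
  rw [Fintype.card_fin, hS] at hg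
  have hQ : (Q : ℝ) ≤ (Q : ℝ) ^ 2 := by exact_mod_cast Nat.le_self_pow two_ne_zero Q
  calc ∑ q, ‖x q‖ ^ 2 = ⟪∑ q, x q, f⟫_ℝ := hS
    _ ≤ (1 + Q * c) * ‖f‖ ^ 2 := real_inner_le_mul_norm_sq_of_norm_sq_le (by positivity) hg
    _ ≤ (1 + (Q : ℝ) ^ 2 * c) * ‖f‖ ^ 2 := by gcongr

/-- Generalized Bessel inequality (Proposition 2 of the paper):
if `c` bounds the cosine of the first principal angle between any two distinct
subspaces `K q`, then `∑ q ‖P_q f‖² ≤ (1 + Q² c) ‖f‖²`. -/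
theorem stmt_0
    {H : Type*} [NormedAddCommGroup H] [InnerProductSpace ℝ H] [CompleteSpace H]
    (Q : ℕ) (K : Fin Q → Submodule ℝ H) [∀ q, Submodule.HasOrthogonalProjection (K q)]
    (c : ℝ) (hc0 : 0 ≤ c)
    (hc : ∀ q k, q ≠ k → ∀ u ∈ K q, ∀ w ∈ K k, ‖u‖ = 1 → ‖w‖ = 1 → ⟪u, w⟫_ℝ ≤ c)
    (f : H) :
    ∑ q, ‖(Submodule.orthogonalProjectionOnto (K q) f : H)‖ ^ 2 ≤ (1 + (Q : ℝ) ^ 2 * c) * ‖f‖ ^ 2 :=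
  stmt_0_general Q K c hc0 hc f
end

section
/- Local-to-global effective dimension bound: Let φ(x_1), …, φ(x_n) ∈ H with ‖φ(x_i)‖ ≤ κ for all i, let {[n]_q}_{q=1}^Q be a partition of {1,…,n} with sizes n_q, ρ_q = n_q/n, T = (1/n)∑_i φ(x_i)⊗φ(x_i), T_q = (1/n_q)∑_{i∈[n]_q} φ(x_i)⊗φ(x_i), H_q = span{φ(x_i) : i ∈ [n]_q}, and θ = min_{q≠k} ∠(H_q, H_k). For λ > 0, set λ_q = λ/ρ_q, N(λ) = Tr((T+λ)^{-1}T), and N_q(λ_q) = Tr((T_q+λ_q)^{-1}T_q). Then ∑_{q=1}^Q N_q(λ_q) ≤ (1 + κ² cos²θ / λ) N(λ). -/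
/-! The effective dimensions are traces against sums of rank-one terms, so
`N(λ) = n⁻¹ ∑ᵢ ⟪φᵢ, (T + λ)⁻¹ φᵢ⟫` and `N_q(λ_q) = n_q⁻¹ ∑_{i ∈ [n]_q} ⟪φᵢ, (T_q + λ_q)⁻¹ φᵢ⟫`,
and it suffices to compare the two resolvent forms sample by sample. For `i ∈ [n]_q` the vector
`v = (T_q + λ_q)⁻¹ φᵢ` lies in the local span `H_q`, so each sample of another block contributes
at most `c²κ²‖v‖²` to `n ⟪T v, v⟫`; hence `⟪(T + λ) v, v⟫ ≤ C ρ_q ⟪(T_q + λ_q) v, v⟫` with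
`C = 1 + κ²c²/λ`. Cauchy–Schwarz for the form of `T + λ` turns this into
`⟪φᵢ, (T_q + λ_q)⁻¹ φᵢ⟫ ≤ C ρ_q ⟪φᵢ, (T + λ)⁻¹ φᵢ⟫`, and summing over the partition gives the bound.
-/

local notation "⟪" x ", " y "⟫_ℝ" => @inner ℝ _ _ x y

open InnerProductSpace Finset

section Scatter

variable {ι H : Type*} [NormedAddCommGroup H] [InnerProductSpace ℝ H]

/-- In the paper's notation `T = n⁻¹ • scatter univ φ` and `T_q = n_q⁻¹ • scatter [n]_q φ`. -/
noncomputable def scatter (s : Finset ι) (φ : ι → H) : H →ₗ[ℝ] H :=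
  ∑ i ∈ s, (rankOne ℝ (φ i) (φ i) : H →ₗ[ℝ] H)

@[simp]
lemma scatter_apply (s : Finset ι) (φ : ι → H) (x : H) :
    scatter s φ x = ∑ i ∈ s, ⟪φ i, x⟫_ℝ • φ i := by
  simp [scatter]

lemma inner_scatter_apply_self (s : Finset ι) (φ : ι → H) (x : H) :
    ⟪scatter s φ x, x⟫_ℝ = ∑ i ∈ s, ⟪φ i, x⟫_ℝ ^ 2 := by
  rw [scatter_apply, sum_inner]
  exact sum_congr rfl fun i _ => by rw [real_inner_smul_left, real_inner_comm x, sq]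

lemma isPositive_scatter (s : Finset ι) (φ : ι → H) : (scatter s φ).IsPositive :=
  LinearMap.isPositive_sum s fun i _ => (isPositive_rankOne_self (φ i)).toLinearMap

lemma isPositive_smul_scatter_add_smul_id (s : Finset ι) (φ : ι → H) {a μ : ℝ} (ha : 0 ≤ a)
    (hμ : 0 ≤ μ) : (a • scatter s φ + μ • LinearMap.id).IsPositive :=
  ((isPositive_scatter s φ).smul_of_nonneg ha).add (LinearMap.isPositive_id.smul_of_nonneg hμ)

lemma scatter_apply_mem_span (s : Finset ι) (φ : ι → H) (x : H) :
    scatter s φ x ∈ Submodule.span ℝ (φ '' s) := by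
  rw [scatter_apply]
  exact Submodule.sum_mem _ fun i hi =>
    Submodule.smul_mem _ _ (Submodule.subset_span ⟨i, hi, rfl⟩)

lemma trace_comp_scatter [FiniteDimensional ℝ H] (s : Finset ι) (φ : ι → H) (R : H →ₗ[ℝ] H) :
    LinearMap.trace ℝ H (R ∘ₗ scatter s φ) = ∑ i ∈ s, ⟪φ i, R (φ i)⟫_ℝ := by
  have h : R ∘ₗ scatter s φ = ∑ i ∈ s, (rankOne ℝ (R (φ i)) (φ i) : H →ₗ[ℝ] H) := by
    ext x
    simp
  simp [h, map_sum, trace_rankOne]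

lemma inner_scatter_univ_apply_self_le [Fintype ι] [DecidableEq ι] (φ : ι → H) (s : Finset ι)
    {x : H} {M : ℝ} (hM : ∀ j ∉ s, ⟪φ j, x⟫_ℝ ^ 2 ≤ M) :
    ⟪scatter univ φ x, x⟫_ℝ ≤ ⟪scatter s φ x, x⟫_ℝ + #sᶜ * M := by
  rw [inner_scatter_apply_self, inner_scatter_apply_self, ← sum_add_sum_compl s, ← nsmul_eq_mul]
  gcongr
  exact sum_le_card_nsmul _ _ _ fun j hj => hM j (mem_compl.mp hj)

end Scatter

section Positive

variable {H : Type*} [NormedAddCommGroup H] [InnerProductSpace ℝ H] {B R : H →ₗ[ℝ] H}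

lemma LinearMap.IsPositive.inner_apply_sq_le (hB : B.IsPositive) (x y : H) :
    ⟪B x, y⟫_ℝ ^ 2 ≤ ⟪B x, x⟫_ℝ * ⟪B y, y⟫_ℝ := by
  have hquad : ∀ t : ℝ, 0 ≤ ⟪B y, y⟫_ℝ * (t * t) + 2 * ⟪B x, y⟫_ℝ * t + ⟪B x, x⟫_ℝ := by
    intro t
    have h := hB.inner_nonneg_left (x + t • y)
    have hsymm : ⟪B y, x⟫_ℝ = ⟪B x, y⟫_ℝ := by
      rw [hB.isSymmetric, real_inner_comm]
    simp only [map_add, map_smul, inner_add_left, inner_add_right, real_inner_smul_left,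
      real_inner_smul_right, hsymm] at h
    linarith
  have hdisc := discrim_le_zero hquad
  rw [discrim] at hdisc
  nlinarith

lemma LinearMap.IsPositive.inner_apply_nonneg_of_comp_eq_id (hB : B.IsPositive)
    (hR : B ∘ₗ R = LinearMap.id) (x : H) : 0 ≤ ⟪x, R x⟫_ℝ := by
  simpa [← LinearMap.comp_apply, hR] using hB.inner_nonneg_left (R x)

lemma LinearMap.IsPositive.inner_sq_le_of_comp_eq_id (hB : B.IsPositive)
    (hR : B ∘ₗ R = LinearMap.id) (x y : H) : ⟪x, y⟫_ℝ ^ 2 ≤ ⟪x, R x⟫_ℝ * ⟪B y, y⟫_ℝ := by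
  have hx : B (R x) = x := by simpa using LinearMap.congr_fun hR x
  simpa [hx, real_inner_comm x] using hB.inner_apply_sq_le (R x) y

/-- Cauchy–Schwarz for the form of `B` gives `⟪x, R' x⟫² ≤ ⟪x, R x⟫ ⟪B (R' x), R' x⟫`, and
`⟪B' (R' x), R' x⟫ = ⟪x, R' x⟫`. -/
lemma LinearMap.IsPositive.inner_le_mul_inner_of_comp_eq_id {B' R' : H →ₗ[ℝ] H}
    (hB : B.IsPositive) (hR : B ∘ₗ R = LinearMap.id) (hB' : B'.IsPositive)
    (hR' : B' ∘ₗ R' = LinearMap.id) {C : ℝ} (hC : 0 ≤ C) (x : H)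
    (hle : ⟪B (R' x), R' x⟫_ℝ ≤ C * ⟪B' (R' x), R' x⟫_ℝ) :
    ⟪x, R' x⟫_ℝ ≤ C * ⟪x, R x⟫_ℝ := by
  have hβ : ⟪B' (R' x), R' x⟫_ℝ = ⟪x, R' x⟫_ℝ := by
    rw [← LinearMap.comp_apply, hR', LinearMap.id_apply]
  rw [hβ] at hle
  have hβ0 := hB'.inner_apply_nonneg_of_comp_eq_id hR' x
  have hα0 := hB.inner_apply_nonneg_of_comp_eq_id hR x
  have hcs := hB.inner_sq_le_of_comp_eq_id hR x (R' x)
  rcases hβ0.eq_or_lt with hβ0 | hβpos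
  · rw [← hβ0]
    exact mul_nonneg hC hα0
  · refine le_of_mul_le_mul_right ?_ hβpos
    nlinarith [mul_le_mul_of_nonneg_left hle hα0]

end Positive

lemma abs_inner_le_of_forall_norm_eq_one {H : Type*} [NormedAddCommGroup H]
    [InnerProductSpace ℝ H] {U W : Submodule ℝ H} {c : ℝ}
    (hc : ∀ u ∈ U, ∀ w ∈ W, ‖u‖ = 1 → ‖w‖ = 1 → ⟪u, w⟫_ℝ ≤ c) {u w : H} (hu : u ∈ U)
    (hw : w ∈ W) : |⟪u, w⟫_ℝ| ≤ c * (‖u‖ * ‖w‖) := by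
  have key : ∀ u ∈ U, ⟪u, w⟫_ℝ ≤ c * (‖u‖ * ‖w‖) := by
    intro u hu
    rcases eq_or_ne u 0 with rfl | hu0
    · simp
    rcases eq_or_ne w 0 with rfl | hw0
    · simp
    have hunit := hc (‖u‖⁻¹ • u) (U.smul_mem _ hu) (‖w‖⁻¹ • w) (W.smul_mem _ hw)
      (norm_smul_inv_norm hu0) (norm_smul_inv_norm hw0)
    rw [real_inner_smul_left, real_inner_smul_right, ← mul_assoc, ← mul_inv,
      inv_mul_le_iff₀ (by positivity)] at hunit
    linarith
  refine abs_le.mpr ⟨?_, key u hu⟩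
  have hneg := key (-u) (U.neg_mem hu)
  rw [inner_neg_left, norm_neg] at hneg
  linarith

lemma mem_of_apply_add_smul_eq {H : Type*} [AddCommGroup H] [Module ℝ H] {U : Submodule ℝ H}
    {A : H →ₗ[ℝ] H} (hA : ∀ x, A x ∈ U) {μ : ℝ} (hμ : μ ≠ 0) {v x : H} (hx : x ∈ U)
    (hv : A v + μ • v = x) : v ∈ U := by
  have hv_eq : v = μ⁻¹ • (x - A v) := by
    rw [← hv, add_sub_cancel_left, smul_smul, inv_mul_cancel₀ hμ, one_smul]
  rw [hv_eq]
  exact U.smul_mem _ (U.sub_mem hx (hA v))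

section Partition

variable {ι β H : Type*} [NormedAddCommGroup H] [InnerProductSpace ℝ H]

lemma inner_sq_le_of_notMem {φ : ι → H} {I : β → Finset ι} {κ c : ℝ} (hκ : ∀ i, ‖φ i‖ ≤ κ)
    (hcover : ∀ i, ∃ q, i ∈ I q)
    (hc : ∀ q k, q ≠ k →
      ∀ u ∈ Submodule.span ℝ (φ '' (I q : Set ι)),
      ∀ w ∈ Submodule.span ℝ (φ '' (I k : Set ι)),
      ‖u‖ = 1 → ‖w‖ = 1 → ⟪u, w⟫_ℝ ≤ c)
    {q : β} {v : H} (hv : v ∈ Submodule.span ℝ (φ '' (I q : Set ι))) {j : ι} (hj : j ∉ I q) :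
    ⟪φ j, v⟫_ℝ ^ 2 ≤ c ^ 2 * κ ^ 2 * ‖v‖ ^ 2 := by
  obtain ⟨k, hk⟩ := hcover j
  have hqk : q ≠ k := by
    rintro rfl
    exact hj hk
  have habs := abs_inner_le_of_forall_norm_eq_one (hc q k hqk) hv
    (Submodule.subset_span ⟨j, hk, rfl⟩)
  have hφ : ‖φ j‖ ^ 2 ≤ κ ^ 2 := pow_le_pow_left₀ (norm_nonneg _) (hκ j) 2
  calc ⟪φ j, v⟫_ℝ ^ 2 = |⟪v, φ j⟫_ℝ| ^ 2 := by rw [sq_abs, real_inner_comm]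
    _ ≤ (c * (‖v‖ * ‖φ j‖)) ^ 2 := pow_le_pow_left₀ (abs_nonneg _) habs 2
    _ = c ^ 2 * ‖φ j‖ ^ 2 * ‖v‖ ^ 2 := by ring
    _ ≤ c ^ 2 * κ ^ 2 * ‖v‖ ^ 2 := by gcongr

lemma sum_sum_eq_sum_of_partition {M : Type*} [Fintype ι] [DecidableEq ι] [Fintype β]
    [AddCommMonoid M] {I : β → Finset ι} (hdisj : ∀ q k, q ≠ k → Disjoint (I q) (I k))
    (hcover : ∀ i, ∃ q, i ∈ I q) (f : ι → M) : ∑ q, ∑ i ∈ I q, f i = ∑ i, f i := by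
  have hunion : univ.biUnion I = univ :=
    eq_univ_of_forall fun i => mem_biUnion.mpr ((hcover i).imp fun q hq => ⟨mem_univ q, hq⟩)
  rw [← sum_biUnion fun q _ k _ hqk => hdisj q k hqk, hunion]

lemma inner_scatter_univ_add_le [Fintype ι] [DecidableEq ι] (φ : ι → H) (s : Finset ι)
    {v : H} {c κ lam : ℝ} (hlam : 0 < lam)
    (hcross : ∀ j ∉ s, ⟪φ j, v⟫_ℝ ^ 2 ≤ c ^ 2 * κ ^ 2 * ‖v‖ ^ 2) :
    (Fintype.card ι : ℝ)⁻¹ * ⟪scatter univ φ v, v⟫_ℝ + lam * ‖v‖ ^ 2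
      ≤ (1 + κ ^ 2 * c ^ 2 / lam) *
        ((Fintype.card ι : ℝ)⁻¹ * ⟪scatter s φ v, v⟫_ℝ + lam * ‖v‖ ^ 2) := by
  set N : ℝ := (Fintype.card ι : ℝ)
  set M := c ^ 2 * κ ^ 2 * ‖v‖ ^ 2
  have hglobal : N⁻¹ * ⟪scatter univ φ v, v⟫_ℝ ≤ N⁻¹ * ⟪scatter s φ v, v⟫_ℝ + M := by
    have hcard : N⁻¹ * #sᶜ ≤ 1 :=
      inv_mul_le_one_of_le₀ (by simp only [N]; exact_mod_cast card_le_univ sᶜ) (by positivity)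
    have hM : 0 ≤ M := by positivity
    nlinarith [inner_scatter_univ_apply_self_le φ s hcross, inv_nonneg.mpr (by positivity : 0 ≤ N)]
  have hlocal : 0 ≤ κ ^ 2 * c ^ 2 / lam * (N⁻¹ * ⟪scatter s φ v, v⟫_ℝ) := by
    have hform := (isPositive_scatter s φ).inner_nonneg_left v
    positivity
  have hM_eq : κ ^ 2 * c ^ 2 / lam * (lam * ‖v‖ ^ 2) = M := by
    field_simp
    ring
  linarith

lemma inner_local_resolvent_le [Fintype ι] [DecidableEq ι] {φ : ι → H} {s : Finset ι}
    (hs : s.Nonempty) {c κ lam : ℝ} (hlam : 0 < lam)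
    (hcross : ∀ v ∈ Submodule.span ℝ (φ '' (s : Set ι)), ∀ j ∉ s,
      ⟪φ j, v⟫_ℝ ^ 2 ≤ c ^ 2 * κ ^ 2 * ‖v‖ ^ 2)
    {R Rs : H →ₗ[ℝ] H}
    (hR : ((Fintype.card ι : ℝ)⁻¹ • scatter univ φ + lam • LinearMap.id) ∘ₗ R = LinearMap.id)
    (hRs : ((#s : ℝ)⁻¹ • scatter s φ + (lam / (#s / Fintype.card ι)) • LinearMap.id) ∘ₗ Rs =
      LinearMap.id)
    {x : H} (hx : x ∈ Submodule.span ℝ (φ '' (s : Set ι))) :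
    (#s : ℝ)⁻¹ * ⟪x, Rs x⟫_ℝ
      ≤ (1 + κ ^ 2 * c ^ 2 / lam) * ((Fintype.card ι : ℝ)⁻¹ * ⟪x, R x⟫_ℝ) := by
  set N : ℝ := (Fintype.card ι : ℝ)
  set m : ℝ := (#s : ℝ)
  set C := 1 + κ ^ 2 * c ^ 2 / lam
  have hm : 0 < m := by simpa [m] using hs.card_pos
  have hN : 0 < N := by simpa [N] using Fintype.card_pos_iff.mpr ⟨hs.choose⟩
  have hμ : 0 < lam / (m / N) := by positivity
  set B : H →ₗ[ℝ] H := N⁻¹ • scatter univ φ + lam • LinearMap.id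
  set Bs : H →ₗ[ℝ] H := m⁻¹ • scatter s φ + (lam / (m / N)) • LinearMap.id
  have hB : B.IsPositive := isPositive_smul_scatter_add_smul_id _ _ (by positivity) hlam.le
  have hBs : Bs.IsPositive := isPositive_smul_scatter_add_smul_id _ _ (by positivity) hμ.le
  have hv : Rs x ∈ Submodule.span ℝ (φ '' (s : Set ι)) :=
    mem_of_apply_add_smul_eq (A := m⁻¹ • scatter s φ)
      (fun y => Submodule.smul_mem _ _ (scatter_apply_mem_span s φ y)) hμ.ne' hx
      (by simpa only [Bs, LinearMap.comp_apply, LinearMap.add_apply, LinearMap.smul_apply,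
        LinearMap.id_apply] using LinearMap.congr_fun hRs x)
  have hcomp : ⟪B (Rs x), Rs x⟫_ℝ ≤ m / N * C * ⟪Bs (Rs x), Rs x⟫_ℝ := by
    have hB_apply :
        ⟪B (Rs x), Rs x⟫_ℝ = N⁻¹ * ⟪scatter univ φ (Rs x), Rs x⟫_ℝ + lam * ‖Rs x‖ ^ 2 := by
      simp only [B, LinearMap.add_apply, LinearMap.smul_apply, LinearMap.id_apply, inner_add_left,
        real_inner_smul_left, real_inner_self_eq_norm_sq]
    have hBs_apply : m / N * C * ⟪Bs (Rs x), Rs x⟫_ℝ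
        = C * (N⁻¹ * ⟪scatter s φ (Rs x), Rs x⟫_ℝ + lam * ‖Rs x‖ ^ 2) := by
      simp only [Bs, LinearMap.add_apply, LinearMap.smul_apply, LinearMap.id_apply, inner_add_left,
        real_inner_smul_left, real_inner_self_eq_norm_sq]
      field_simp
    rw [hB_apply, hBs_apply]
    exact inner_scatter_univ_add_le φ s hlam (hcross _ hv)
  have hresolvent := hB.inner_le_mul_inner_of_comp_eq_id hR hBs hRs (by positivity) x hcomp
  calc m⁻¹ * ⟪x, Rs x⟫_ℝ ≤ m⁻¹ * (m / N * C * ⟪x, R x⟫_ℝ) := by gcongr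
    _ = C * (N⁻¹ * ⟪x, R x⟫_ℝ) := by field_simp

end Partition

theorem stmt_15_general
    {H : Type*} [NormedAddCommGroup H] [InnerProductSpace ℝ H] [FiniteDimensional ℝ H]
    (n Q : ℕ) (φ : Fin n → H) (κ : ℝ) (hκ : ∀ i, ‖φ i‖ ≤ κ)
    (I : Fin Q → Finset (Fin n))
    (hdisj : ∀ q k, q ≠ k → Disjoint (I q) (I k))
    (hcover : ∀ i, ∃ q, i ∈ I q)
    (T : H →ₗ[ℝ] H) (hT : ∀ h, T h = (n : ℝ)⁻¹ • ∑ i, ⟪h, φ i⟫_ℝ • φ i)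
    (Tq : Fin Q → (H →ₗ[ℝ] H))
    (hTq : ∀ q h, Tq q h = (((I q).card : ℝ))⁻¹ • ∑ i ∈ I q, ⟪h, φ i⟫_ℝ • φ i)
    (lam : ℝ) (hlam : 0 < lam)
    (lamq : Fin Q → ℝ) (hlamq : ∀ q, lamq q = lam / (((I q).card : ℝ) / n))
    (c : ℝ)
    (hc : ∀ q k, q ≠ k →
      ∀ u ∈ Submodule.span ℝ (φ '' (I q : Set (Fin n))),
      ∀ w ∈ Submodule.span ℝ (φ '' (I k : Set (Fin n))),
      ‖u‖ = 1 → ‖w‖ = 1 → ⟪u, w⟫_ℝ ≤ c)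
    (R : H →ₗ[ℝ] H)
    (hR1 : (T + lam • LinearMap.id) ∘ₗ R = LinearMap.id)
    (Rq : Fin Q → (H →ₗ[ℝ] H))
    (hRq1 : ∀ q, (Tq q + lamq q • LinearMap.id) ∘ₗ Rq q = LinearMap.id) :
    ∑ q, LinearMap.trace ℝ H (Rq q ∘ₗ Tq q)
      ≤ (1 + κ ^ 2 * c ^ 2 / lam) * LinearMap.trace ℝ H (R ∘ₗ T) := by
  have hT' : T = (n : ℝ)⁻¹ • scatter univ φ := by
    ext h
    simp [hT, real_inner_comm]
  have hTq' : ∀ q, Tq q = (#(I q) : ℝ)⁻¹ • scatter (I q) φ := fun q => by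
    ext h
    simp [hTq, real_inner_comm]
  have hsample : ∀ q, ∀ i ∈ I q, (#(I q) : ℝ)⁻¹ * ⟪φ i, Rq q (φ i)⟫_ℝ
      ≤ (1 + κ ^ 2 * c ^ 2 / lam) * ((n : ℝ)⁻¹ * ⟪φ i, R (φ i)⟫_ℝ) := by
    intro q i hi
    simpa using inner_local_resolvent_le ⟨i, hi⟩ hlam
      (fun v hv j hj => inner_sq_le_of_notMem hκ hcover hc hv hj) (by simpa [hT'] using hR1)
      (by simpa [hTq' q, hlamq q] using hRq1 q) (Submodule.subset_span ⟨i, hi, rfl⟩)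
  calc ∑ q, LinearMap.trace ℝ H (Rq q ∘ₗ Tq q)
      = ∑ q, ∑ i ∈ I q, (#(I q) : ℝ)⁻¹ * ⟪φ i, Rq q (φ i)⟫_ℝ := by
        simp only [hTq', LinearMap.comp_smul, map_smul, trace_comp_scatter, smul_eq_mul, mul_sum]
    _ ≤ ∑ q, ∑ i ∈ I q, (1 + κ ^ 2 * c ^ 2 / lam) * ((n : ℝ)⁻¹ * ⟪φ i, R (φ i)⟫_ℝ) :=
        sum_le_sum fun q _ => sum_le_sum (hsample q)
    _ = (1 + κ ^ 2 * c ^ 2 / lam) * LinearMap.trace ℝ H (R ∘ₗ T) := by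
        rw [sum_sum_eq_sum_of_partition hdisj hcover, hT']
        simp only [LinearMap.comp_smul, map_smul, trace_comp_scatter, smul_eq_mul, mul_sum]

/-- Local-to-global effective dimension bound (Proposition 3 of the paper):
with `λ_q = λ / ρ_q`, `∑_q N_q(λ_q) ≤ (1 + κ² cos²θ / λ) N(λ)`, where `c`
bounds the cosine of the minimal principal angle between the local spans. -/
theorem stmt_15
    {H : Type*} [NormedAddCommGroup H] [InnerProductSpace ℝ H] [FiniteDimensional ℝ H]
    (n Q : ℕ) (hn : 0 < n) (φ : Fin n → H) (κ : ℝ) (hκ : ∀ i, ‖φ i‖ ≤ κ)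
    (I : Fin Q → Finset (Fin n))
    (hdisj : ∀ q k, q ≠ k → Disjoint (I q) (I k))
    (hcover : ∀ i, ∃ q, i ∈ I q)
    (hne : ∀ q, (I q).Nonempty)
    (T : H →ₗ[ℝ] H) (hT : ∀ h, T h = (n : ℝ)⁻¹ • ∑ i, ⟪h, φ i⟫_ℝ • φ i)
    (Tq : Fin Q → (H →ₗ[ℝ] H))
    (hTq : ∀ q h, Tq q h = (((I q).card : ℝ))⁻¹ • ∑ i ∈ I q, ⟪h, φ i⟫_ℝ • φ i)
    (lam : ℝ) (hlam : 0 < lam)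
    (lamq : Fin Q → ℝ) (hlamq : ∀ q, lamq q = lam / (((I q).card : ℝ) / n))
    (c : ℝ) (hc0 : 0 ≤ c)
    (hc : ∀ q k, q ≠ k →
      ∀ u ∈ Submodule.span ℝ (φ '' (I q : Set (Fin n))),
      ∀ w ∈ Submodule.span ℝ (φ '' (I k : Set (Fin n))),
      ‖u‖ = 1 → ‖w‖ = 1 → ⟪u, w⟫_ℝ ≤ c)
    (R : H →ₗ[ℝ] H)
    (hR1 : (T + lam • LinearMap.id) ∘ₗ R = LinearMap.id)
    (hR2 : R ∘ₗ (T + lam • LinearMap.id) = LinearMap.id)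
    (Rq : Fin Q → (H →ₗ[ℝ] H))
    (hRq1 : ∀ q, (Tq q + lamq q • LinearMap.id) ∘ₗ Rq q = LinearMap.id)
    (hRq2 : ∀ q, Rq q ∘ₗ (Tq q + lamq q • LinearMap.id) = LinearMap.id) :
    ∑ q, LinearMap.trace ℝ H (Rq q ∘ₗ Tq q)
      ≤ (1 + κ ^ 2 * c ^ 2 / lam) * LinearMap.trace ℝ H (R ∘ₗ T) :=
  stmt_15_general n Q φ κ hκ I hdisj hcover T hT Tq hTq lam hlam lamq hlamq c hc R hR1 Rq hRq1
end
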